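/- The canonical cylinder decomposition of an open set is unique: let A ⊆ 2^ω be open, and suppose φ and ψ each assign to every i ∈ ℕ a set of binary strings of length i such that (a) the cylinders {[σ] : σ ∈ φ(i), i ∈ ℕ} are pairwise disjoint with union A, and likewise for ψ, and (b) both φ and ψ satisfy property (*). Then φ = ψ. -/

import Mathlib

/-!
Strings of a cylinder decomposition form an antichain for the prefix order. If `σ ∈ φ i` and
`τ ∈ ψ j` cover a common point, they are comparable; were `σ` a proper prefix of `τ`, no string
of `ψ` could be a prefix of `σ`, so `[σ] ⊆ A` would be covered by the `ψ`-cylinders of proper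
extensions of `σ`, of total measure `μ [σ] = 2^{-|σ|}`, contradicting `(*)` for `ψ` at `σ`.
Symmetrically `τ` is no proper prefix of `σ`, so `σ = τ`.
-/

open MeasureTheory

noncomputable section

/-- The binary-digit map sending `r ∈ [0,1)` to its sequence of binary digits,
so `binDigits r n` is the `n`-th binary digit of `r`. -/
def binDigits (r : ℝ) : ℕ → Bool := fun n => decide (⌊r * 2 ^ (n + 1)⌋ % 2 = 1)

/-- The uniform product ("coin-flipping") probability measure `μ` on Cantor space `2^ω`,
realized as the pushforward of Lebesgue measure on `[0,1)` under the binary-digit map. -/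
def μC : Measure (ℕ → Bool) := (volume.restrict (Set.Ico (0 : ℝ) 1)).map binDigits

/-- The basic clopen cylinder `[σ]` determined by a finite binary string `σ`. -/
def cyl (σ : List Bool) : Set (ℕ → Bool) :=
  {f | ∀ i : ℕ, ∀ h : i < σ.length, f i = σ.get ⟨i, h⟩}

/-- Property (*): for every binary string `σ` of length `i` not in `φ i`, the union of the
cylinders determined by proper extensions of `σ` appearing in some `φ j`, `j > i`,
has measure `< 2^{-i}`. -/
def StarProperty (φ : ℕ → Set (List Bool)) : Prop :=
  ∀ i : ℕ, ∀ σ : List Bool, σ.length = i → σ ∉ φ i →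
    μC (⋃ τ ∈ {τ : List Bool | σ <+: τ ∧ σ ≠ τ ∧ ∃ j, i < j ∧ τ ∈ φ j}, cyl τ)
      < (1 / 2 : ENNReal) ^ i

lemma mem_cyl_iff {σ : List Bool} {f : ℕ → Bool} :
    f ∈ cyl σ ↔ ∀ i : ℕ, ∀ h : i < σ.length, f i = σ[i] := Iff.rfl

lemma cyl_append_singleton (σ : List Bool) (b : Bool) :
    cyl (σ ++ [b]) = cyl σ ∩ {f | f σ.length = b} := by
  ext f
  simp only [mem_cyl_iff, Set.mem_inter_iff, Set.mem_ofPred_eq, List.length_append,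
    List.length_singleton]
  refine ⟨fun h => ⟨fun i hi => ?_, by simpa using h σ.length (by omega)⟩, ?_⟩
  · rw [h i (by omega), List.getElem_append_left hi]
  · rintro ⟨h, hlast⟩ i hi
    rcases Nat.lt_or_ge i σ.length with hi' | hi'
    · rw [h i hi', List.getElem_append_left hi']
    · obtain rfl : i = σ.length := by omega
      simpa using hlast

lemma measurableSet_cyl (σ : List Bool) : MeasurableSet (cyl σ) := by
  have : cyl σ = ⋂ i : Fin σ.length, (fun f : ℕ → Bool => f i) ⁻¹' {σ.get i} := by
    ext f
    simp only [Set.mem_iInter, Set.mem_preimage, Set.mem_singleton_iff]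
    exact ⟨fun h i => h i i.2, fun h i hi => h ⟨i, hi⟩⟩
  rw [this]
  exact .iInter fun i => measurable_pi_apply (i : ℕ) (measurableSet_singleton _)

lemma measurable_binDigits : Measurable binDigits :=
  measurable_pi_iff.mpr fun n => (measurable_from_top (f := fun z : ℤ => decide (z % 2 = 1))).comp
    (Int.measurable_floor.comp (measurable_id.mul_const ((2 : ℝ) ^ (n + 1))))

def binaryValue (σ : List Bool) : ℕ := σ.foldl (fun a b => 2 * a + b.toNat) 0

lemma binaryValue_append_singleton (σ : List Bool) (b : Bool) :
    binaryValue (σ ++ [b]) = 2 * binaryValue σ + b.toNat := by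
  simp [binaryValue]

lemma binaryValue_lt (σ : List Bool) : binaryValue σ < 2 ^ σ.length := by
  induction σ using List.reverseRecOn with
  | nil => simp [binaryValue]
  | append_singleton σ b ih =>
    rw [binaryValue_append_singleton, List.length_append, List.length_singleton, pow_succ]
    have := Bool.toNat_le b
    omega

lemma floor_mul_two_pow_succ_div_two (r : ℝ) (n : ℕ) :
    ⌊r * 2 ^ (n + 1)⌋ / 2 = ⌊r * 2 ^ n⌋ := by
  rw [← Int.cast_ofNat, ← Nat.cast_ofNat, ← Int.floor_div_natCast]
  congr 1
  push_cast
  ring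

lemma binDigits_mem_cyl_iff (σ : List Bool) {r : ℝ} (hr : r ∈ Set.Ico (0 : ℝ) 1) :
    binDigits r ∈ cyl σ ↔ ⌊r * 2 ^ σ.length⌋ = binaryValue σ := by
  induction σ using List.reverseRecOn with
  | nil =>
    rw [List.length_nil, pow_zero, mul_one, Int.floor_eq_zero_iff.mpr hr]
    exact iff_of_true (fun i h => absurd h (by simp)) rfl
  | append_singleton σ b ih =>
    rw [cyl_append_singleton, Set.mem_inter_iff, ih, List.length_append, List.length_singleton,
      binaryValue_append_singleton, ← floor_mul_two_pow_succ_div_two]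
    simp only [Set.mem_ofPred_eq, binDigits]
    cases b <;> simp <;> omega

lemma μC_cyl (σ : List Bool) : μC (cyl σ) = (1 / 2 : ENNReal) ^ σ.length := by
  set n := σ.length
  set v := binaryValue σ
  have h2n : (0 : ℝ) < 2 ^ n := by positivity
  have hv : (v : ℝ) + 1 ≤ 2 ^ n := by exact_mod_cast binaryValue_lt σ
  have hpre : binDigits ⁻¹' cyl σ ∩ Set.Ico 0 1 = Set.Ico ((v : ℝ) / 2 ^ n) ((v + 1) / 2 ^ n) := by
    ext r
    simp only [Set.mem_inter_iff, Set.mem_preimage, Set.mem_Ico, div_le_iff₀ h2n,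
      lt_div_iff₀ h2n]
    constructor
    · rintro ⟨h, hr⟩
      simpa [Int.floor_eq_iff] using (binDigits_mem_cyl_iff σ hr).mp h
    · rintro ⟨hlo, hhi⟩
      have hr : r ∈ Set.Ico (0 : ℝ) 1 := ⟨by nlinarith, by nlinarith⟩
      refine ⟨(binDigits_mem_cyl_iff σ hr).mpr ?_, hr⟩
      simpa [Int.floor_eq_iff] using ⟨hlo, hhi⟩
  rw [μC, Measure.map_apply measurable_binDigits (measurableSet_cyl σ),
    Measure.restrict_apply (measurable_binDigits (measurableSet_cyl σ)), hpre, Real.volume_Ico,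
    ← sub_div, add_sub_cancel_left, one_div, ← inv_pow, ENNReal.ofReal_pow (by norm_num),
    ENNReal.ofReal_inv_of_pos two_pos, ENNReal.ofReal_ofNat, one_div]

lemma cyl_nonempty (σ : List Bool) : (cyl σ).Nonempty :=
  ⟨fun i => if h : i < σ.length then σ[i] else false, fun i h => by simp [h]⟩

lemma cyl_subset_cyl {ρ σ : List Bool} (h : ρ <+: σ) : cyl σ ⊆ cyl ρ := fun _ hf =>
  mem_cyl_iff.mpr fun i hi =>
    (mem_cyl_iff.mp hf i (hi.trans_le h.length_le)).trans (h.getElem hi).symm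

lemma prefix_of_mem_cyl {σ τ : List Bool} {f : ℕ → Bool} (hσ : f ∈ cyl σ) (hτ : f ∈ cyl τ)
    (h : σ.length ≤ τ.length) : σ <+: τ := by
  rw [List.prefix_iff_eq_take]
  refine List.ext_getElem (by simpa using h) fun i h₁ h₂ => ?_
  rw [List.getElem_take, ← mem_cyl_iff.mp hσ i h₁, mem_cyl_iff.mp hτ i (h₁.trans_le h)]

lemma prefix_or_prefix_of_mem_cyl {σ τ : List Bool} {f : ℕ → Bool} (hσ : f ∈ cyl σ)
    (hτ : f ∈ cyl τ) : σ <+: τ ∨ τ <+: σ :=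
  (le_total σ.length τ.length).imp (prefix_of_mem_cyl hσ hτ) (prefix_of_mem_cyl hτ hσ)

structure IsCylinderDecomposition (A : Set (ℕ → Bool)) (F : ℕ → Set (List Bool)) : Prop where
  length_eq : ∀ i : ℕ, ∀ σ ∈ F i, σ.length = i
  disjoint : ∀ i j : ℕ, ∀ σ τ : List Bool, σ ∈ F i → τ ∈ F j → σ ≠ τ → Disjoint (cyl σ) (cyl τ)
  iUnion_eq : (⋃ i, ⋃ σ ∈ F i, cyl σ) = A

namespace IsCylinderDecomposition

variable {A : Set (ℕ → Bool)} {F G : ℕ → Set (List Bool)}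

lemma cyl_subset (hF : IsCylinderDecomposition A F) {i : ℕ} {σ : List Bool} (hσ : σ ∈ F i) :
    cyl σ ⊆ A :=
  hF.iUnion_eq ▸ Set.subset_iUnion_of_subset i (Set.subset_biUnion_of_mem hσ)

lemma exists_mem_cyl (hF : IsCylinderDecomposition A F) {f : ℕ → Bool} (hf : f ∈ A) :
    ∃ i, ∃ τ ∈ F i, f ∈ cyl τ := by
  rw [← hF.iUnion_eq] at hf
  simpa only [Set.mem_iUnion, exists_prop] using hf

lemma eq_of_prefix (hF : IsCylinderDecomposition A F) {i j : ℕ} {ρ τ : List Bool}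
    (hρ : ρ ∈ F i) (hτ : τ ∈ F j) (h : ρ <+: τ) : ρ = τ := by
  by_contra hne
  obtain ⟨f, hf⟩ := cyl_nonempty τ
  exact Set.disjoint_left.mp (hF.disjoint i j ρ τ hρ hτ hne) (cyl_subset_cyl h hf) hf

lemma exists_prefix_of_cyl_subset (hF : IsCylinderDecomposition A F) (hstar : StarProperty F)
    {σ : List Bool} (hσA : cyl σ ⊆ A) : ∃ i, ∃ ρ ∈ F i, ρ <+: σ := by
  by_contra! hnot
  have hcover : cyl σ ⊆
      ⋃ τ ∈ {τ : List Bool | σ <+: τ ∧ σ ≠ τ ∧ ∃ j, σ.length < j ∧ τ ∈ F j}, cyl τ := by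
    intro f hf
    obtain ⟨j, τ, hτ, hfτ⟩ := hF.exists_mem_cyl (hσA hf)
    have hστ : σ <+: τ := (prefix_or_prefix_of_mem_cyl hf hfτ).resolve_right (hnot j τ hτ)
    have hne : σ ≠ τ := by rintro rfl; exact hnot j σ hτ List.prefix_rfl
    have hlt : σ.length < τ.length :=
      hστ.length_le.lt_of_ne fun h => hne (hστ.eq_of_length h)
    exact Set.mem_biUnion ⟨hστ, hne, τ.length, hlt, hF.length_eq j τ hτ ▸ hτ⟩ hfτ
  have hσ : σ ∉ F σ.length := fun h => hnot _ σ h List.prefix_rfl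
  exact (measure_mono hcover).not_gt (μC_cyl σ ▸ hstar σ.length σ rfl hσ)

lemma eq_of_prefix_of_starProperty (hF : IsCylinderDecomposition A F)
    (hG : IsCylinderDecomposition A G) (hGstar : StarProperty G) {i j : ℕ} {σ τ : List Bool} (hσ : σ ∈ F i) (hτ : τ ∈ G j)
    (h : σ <+: τ) : σ = τ := by
  obtain ⟨k, ρ, hρ, hρσ⟩ := hG.exists_prefix_of_cyl_subset hGstar (hF.cyl_subset hσ)
  obtain rfl := hG.eq_of_prefix hρ hτ (hρσ.trans h)
  exact h.eq_of_length (le_antisymm h.length_le hρσ.length_le)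

lemma le_of_starProperty (hF : IsCylinderDecomposition A F) (hG : IsCylinderDecomposition A G)
    (hFstar : StarProperty F) (hGstar : StarProperty G) : F ≤ G := by
  intro i σ hσ
  obtain ⟨f, hf⟩ := cyl_nonempty σ
  obtain ⟨j, τ, hτ, hfτ⟩ := hG.exists_mem_cyl (hF.cyl_subset hσ hf)
  obtain rfl : σ = τ := (prefix_or_prefix_of_mem_cyl hf hfτ).elim
    (hF.eq_of_prefix_of_starProperty hG hGstar hσ hτ)
    fun h => (hG.eq_of_prefix_of_starProperty hF hFstar hτ hσ h).symm
  rwa [← hF.length_eq i σ hσ, hG.length_eq j σ hτ]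

end IsCylinderDecomposition

theorem canonical_decomposition_unique_general
    (A : Set (ℕ → Bool))
    (φ ψ : ℕ → Set (List Bool))
    (hφlen : ∀ i : ℕ, ∀ σ ∈ φ i, σ.length = i)
    (hψlen : ∀ i : ℕ, ∀ σ ∈ ψ i, σ.length = i)
    (hφdisj : ∀ i j : ℕ, ∀ σ τ : List Bool,
      σ ∈ φ i → τ ∈ φ j → σ ≠ τ → Disjoint (cyl σ) (cyl τ))
    (hψdisj : ∀ i j : ℕ, ∀ σ τ : List Bool,
      σ ∈ ψ i → τ ∈ ψ j → σ ≠ τ → Disjoint (cyl σ) (cyl τ))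
    (hφuni : (⋃ i, ⋃ σ ∈ φ i, cyl σ) = A)
    (hψuni : (⋃ i, ⋃ σ ∈ ψ i, cyl σ) = A)
    (hφstar : StarProperty φ) (hψstar : StarProperty ψ) :
    φ = ψ := by
  have hφ : IsCylinderDecomposition A φ := ⟨hφlen, hφdisj, hφuni⟩
  have hψ : IsCylinderDecomposition A ψ := ⟨hψlen, hψdisj, hψuni⟩
  exact le_antisymm (hφ.le_of_starProperty hψ hφstar hψstar)
    (hψ.le_of_starProperty hφ hψstar hφstar)

/-- The canonical cylinder decomposition of an open set is unique: if `φ` and `ψ` both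
decompose the open set `A` into pairwise disjoint cylinders and both satisfy property (*),
then `φ = ψ`. -/
theorem canonical_decomposition_unique
    (A : Set (ℕ → Bool)) (hA : IsOpen A)
    (φ ψ : ℕ → Set (List Bool))
    (hφlen : ∀ i : ℕ, ∀ σ ∈ φ i, σ.length = i)
    (hψlen : ∀ i : ℕ, ∀ σ ∈ ψ i, σ.length = i)
    (hφdisj : ∀ i j : ℕ, ∀ σ τ : List Bool,
      σ ∈ φ i → τ ∈ φ j → σ ≠ τ → Disjoint (cyl σ) (cyl τ))
    (hψdisj : ∀ i j : ℕ, ∀ σ τ : List Bool,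
      σ ∈ ψ i → τ ∈ ψ j → σ ≠ τ → Disjoint (cyl σ) (cyl τ))
    (hφuni : (⋃ i, ⋃ σ ∈ φ i, cyl σ) = A)
    (hψuni : (⋃ i, ⋃ σ ∈ ψ i, cyl σ) = A)
    (hφstar : StarProperty φ) (hψstar : StarProperty ψ) :
    φ = ψ :=
  canonical_decomposition_unique_general A φ ψ hφlen hψlen hφdisj hψdisj hφuni hψuni hφstar hψstar

end
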